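/- Let n and i be integers with 1 ≤ i < n−3. Then for every integer N there exists an integer m with m ≥ N and m > n such that the polynomial (1+x)^{m−n}·T^{i+3}((1+x)^n) is not a ℚ-linear combination of the polynomials T^j((1+x)^m) for j ∈ {1, 2, …, n} \ {i}; that is, it does not lie in the ℚ-linear span of {T^j((1+x)^m) : 1 ≤ j ≤ n, j ≠ i} in ℚ[x]. -/

import Mathlib

/-!
Dividing the coefficients of a polynomial by `C(m, k)` turns `T^j((1+x)^m)` into the sequence
`k ↦ k^j`. Interpolating this sequence at `k = 0, …, n` and reading off the coefficient of `X^i`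
is therefore a linear functional `φ` that kills `T^j((1+x)^m)` for every `j ≤ n`, `j ≠ i`.

Expanding `T^{i+3}` with Stirling numbers of the second kind,
`(1+x)^{m-n} T^{i+3}((1+x)^n) = ∑ₛ S(i+3, s) n^{(s)} x^s (1+x)^{m-s}`, and the normalized
coefficients of `x^s (1+x)^{m-s}` are `k^{(s)} / m^{(s)}` (falling factorials), whose
interpolant has `X^i`-coefficient `0` for `s < i` and `1 / m^{(i)}` for `s = i`. So `m^{(i)} φ`
of the target polynomial tends to `S(i+3, i) n^{(i)} ≠ 0` as `m → ∞`, and the target leaves the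
span for all large `m`.
-/

open Polynomial

/-- The operator `T p = x · p'` on `ℚ[x]`. -/
noncomputable def T : Polynomial ℚ → Polynomial ℚ := fun p => X * derivative p

open Finset Filter Topology

theorem Nat.choose_sub_mul_descFactorial {n k s : ℕ} (hsk : s ≤ k) :
    (n - s).choose (k - s) * n.descFactorial s = n.choose k * k.descFactorial s := by
  rw [Nat.descFactorial_eq_factorial_mul_choose, Nat.descFactorial_eq_factorial_mul_choose,
    mul_left_comm (n.choose k), Nat.choose_mul hsk]
  ring

theorem coeff_X_pow_mul_one_add_X_pow_mul_descFactorial (R : Type*) [CommSemiring R] (n s k : ℕ) :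
    ((X : R[X]) ^ s * (1 + X) ^ (n - s)).coeff k * (n.descFactorial s : R)
      = (n.choose k : R) * k.descFactorial s := by
  rw [coeff_X_pow_mul', coeff_one_add_X_pow]
  split_ifs with hsk
  · rw [← Nat.cast_mul, ← Nat.cast_mul, Nat.choose_sub_mul_descFactorial hsk]
  · rw [Nat.descFactorial_of_lt (by omega : k < s)]
    simp

theorem Nat.stirlingSecond_pos : ∀ {n k : ℕ}, 0 < k → k ≤ n → 0 < n.stirlingSecond k
  | 0, _, _, _ => by omega
  | _ + 1, 0, _, _ => by omega
  | n + 1, 1, _, _ => by rw [Nat.stirlingSecond_one_right]; omega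
  | n + 1, k + 2, _, h => by
    have := Nat.stirlingSecond_pos (n := n) (k := k + 1) (by omega) (by omega)
    rw [Nat.stirlingSecond_succ_succ]
    omega

theorem X_pow_eq_sum_stirlingSecond_mul_descPochhammer (R : Type*) [CommRing R] (n : ℕ) :
    (X : R[X]) ^ n = ∑ k ∈ range (n + 1), (n.stirlingSecond k : R[X]) * descPochhammer R k := by
  induction n with
  | zero => simp
  | succ n ih =>
    have hX (k : ℕ) : (X : R[X]) * descPochhammer R k
        = descPochhammer R (k + 1) + (k : R[X]) * descPochhammer R k := by
      rw [descPochhammer_succ_right]; ring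
    have hshift : ∑ k ∈ range (n + 1), ((k : R[X]) * n.stirlingSecond k) * descPochhammer R k
        = ∑ k ∈ range (n + 1),
            (((k + 1 : ℕ) : R[X]) * n.stirlingSecond (k + 1)) * descPochhammer R (k + 1) := by
      rw [sum_range_succ', sum_range_succ, Nat.stirlingSecond_eq_zero_of_lt n.lt_succ_self]
      simp
    calc (X : R[X]) ^ (n + 1)
        = ∑ k ∈ range (n + 1), (n.stirlingSecond k : R[X]) * descPochhammer R (k + 1)
          + ∑ k ∈ range (n + 1), ((k : R[X]) * n.stirlingSecond k) * descPochhammer R k := by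
          rw [pow_succ', ih, mul_sum, ← sum_add_distrib]
          refine sum_congr rfl fun k _ => ?_
          rw [mul_left_comm, hX]; ring
      _ = ∑ k ∈ range (n + 1 + 1), ((n + 1).stirlingSecond k : R[X]) * descPochhammer R k := by
          rw [hshift, sum_range_succ' _ (n + 1), ← sum_add_distrib]
          simp only [Nat.stirlingSecond_succ_succ, Nat.stirlingSecond_succ_zero]
          push_cast
          simp only [zero_mul, add_zero]
          refine sum_congr rfl fun k _ => ?_
          ring

theorem coeff_T (p : ℚ[X]) (k : ℕ) : (T p).coeff k = k * p.coeff k := by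
  cases k with
  | zero => simp [T]
  | succ k => rw [T, coeff_X_mul, coeff_derivative]; push_cast; ring

theorem coeff_iterate_T (j : ℕ) (p : ℚ[X]) (k : ℕ) :
    (T^[j] p).coeff k = (k : ℚ) ^ j * p.coeff k := by
  induction j with
  | zero => simp
  | succ j ih => rw [Function.iterate_succ_apply', coeff_T, ih]; ring

theorem iterate_T_one_add_X_pow (j n : ℕ) :
    T^[j] ((1 + X) ^ n) = ∑ s ∈ range (j + 1),
      ((j.stirlingSecond s * n.descFactorial s : ℕ) : ℚ) • (X ^ s * (1 + X) ^ (n - s)) := by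
  ext k
  have hpow :
      (k : ℚ) ^ j = ∑ s ∈ range (j + 1), (j.stirlingSecond s : ℚ) * k.descFactorial s := by
    simpa [eval_finsetSum, descPochhammer_eval_eq_descFactorial] using
      congrArg (eval (k : ℚ)) (X_pow_eq_sum_stirlingSecond_mul_descPochhammer ℚ j)
  rw [coeff_iterate_T, coeff_one_add_X_pow, finsetSum_coeff, hpow, sum_mul]
  refine sum_congr rfl fun s _ => ?_
  rw [coeff_smul, smul_eq_mul, Nat.cast_mul, mul_assoc, mul_comm (k.descFactorial s : ℚ),
    ← coeff_X_pow_mul_one_add_X_pow_mul_descFactorial]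
  ring

/-- `interpCoeff n m i p` is the coefficient of `X ^ i` in the polynomial of degree `≤ n`
interpolating the normalized coefficients `k ↦ p.coeff k / m.choose k` at `k = 0, …, n`. -/
noncomputable def interpCoeff (n m i : ℕ) : ℚ[X] →ₗ[ℚ] ℚ :=
  lcoeff ℚ i ∘ₗ Lagrange.interpolate (range (n + 1)) (fun k : ℕ => (k : ℚ)) ∘ₗ
    LinearMap.pi fun k => (m.choose k : ℚ)⁻¹ • lcoeff ℚ k

theorem interpCoeff_eq_coeff {n m : ℕ} (i : ℕ) (hnm : n ≤ m) {p P : ℚ[X]}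
    (hP : P.degree ≤ n)
    (hp : ∀ k ≤ n, p.coeff k = m.choose k * P.eval (k : ℚ)) :
    interpCoeff n m i p = P.coeff i := by
  have hinj : Set.InjOn (fun k : ℕ => (k : ℚ)) (range (n + 1)) := Nat.cast_injective.injOn
  have hdeg : P.degree < #(range (n + 1)) := by
    rw [card_range]; exact hP.trans_lt (by exact_mod_cast n.lt_succ_self)
  rw [Lagrange.eq_interpolate hinj hdeg]
  simp only [interpCoeff, LinearMap.comp_apply, lcoeff_apply]
  congr 1
  refine Lagrange.interpolate_eq_of_values_eq_on _ _ fun k hk => ?_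
  have hk : k ≤ n := Nat.lt_succ_iff.mp (mem_range.mp hk)
  have hchoose : (m.choose k : ℚ) ≠ 0 := by exact_mod_cast (Nat.choose_pos (hk.trans hnm)).ne'
  simp [hp k hk, hchoose]

theorem interpCoeff_iterate_T_one_add_X_pow {n m i j : ℕ} (hnm : n ≤ m) (hjn : j ≤ n)
    (hji : j ≠ i) :
    interpCoeff n m i (T^[j] ((1 + X) ^ m)) = 0 := by
  rw [interpCoeff_eq_coeff i hnm (P := X ^ j), coeff_X_pow, if_neg hji.symm]
  · rw [degree_X_pow]; exact_mod_cast hjn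
  · intro k _
    rw [coeff_iterate_T, coeff_one_add_X_pow, eval_pow, eval_X, mul_comm]

theorem interpCoeff_eq_zero_of_mem_span {n m i : ℕ} (hnm : n ≤ m) {J : Set ℕ}
    (hJ : ∀ j ∈ J, j ≤ n ∧ j ≠ i) {p : ℚ[X]}
    (hp : p ∈ Submodule.span ℚ ((fun j => T^[j] ((1 + X) ^ m)) '' J)) :
    interpCoeff n m i p = 0 := by
  refine (Submodule.span_le (p := LinearMap.ker (interpCoeff n m i))).mpr ?_ hp
  rintro _ ⟨j, hj, rfl⟩
  exact interpCoeff_iterate_T_one_add_X_pow hnm (hJ j hj).1 (hJ j hj).2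

theorem interpCoeff_X_pow_mul_one_add_X_pow {n m s : ℕ} (i : ℕ) (hnm : n ≤ m)
    (hsn : s ≤ n) :
    interpCoeff n m i (X ^ s * (1 + X) ^ (m - s))
      = (descPochhammer ℚ s).coeff i / m.descFactorial s := by
  have hdesc : (m.descFactorial s : ℚ) ≠ 0 := by
    exact_mod_cast (Nat.descFactorial_pos.mpr (hsn.trans hnm)).ne'
  rw [interpCoeff_eq_coeff i hnm (P := C (m.descFactorial s : ℚ)⁻¹ * descPochhammer ℚ s),
    coeff_C_mul, inv_mul_eq_div]
  · rw [degree_C_mul (inv_ne_zero hdesc)]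
    refine degree_le_natDegree.trans ?_
    rw [descPochhammer_natDegree]
    exact_mod_cast hsn
  · intro k _
    rw [eval_C_mul, descPochhammer_eval_eq_descFactorial, mul_left_comm,
      ← coeff_X_pow_mul_one_add_X_pow_mul_descFactorial ℚ m s k]
    field_simp

theorem interpCoeff_one_add_X_pow_mul_iterate_T {n m i j : ℕ} (hnm : n ≤ m) (hjn : j ≤ n) :
    interpCoeff n m i ((1 + X) ^ (m - n) * T^[j] ((1 + X) ^ n)) =
      ∑ s ∈ range (j + 1), (j.stirlingSecond s * n.descFactorial s : ℚ) *
        ((descPochhammer ℚ s).coeff i / m.descFactorial s) := by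
  rw [iterate_T_one_add_X_pow, mul_sum, map_sum]
  refine sum_congr rfl fun s hs => ?_
  have hsn : s ≤ n := (Nat.lt_succ_iff.mp (mem_range.mp hs)).trans hjn
  rw [mul_smul_comm, mul_left_comm, ← pow_add, Nat.sub_add_sub_cancel hnm hsn, map_smul,
    interpCoeff_X_pow_mul_one_add_X_pow i hnm hsn, smul_eq_mul]
  push_cast; rfl

theorem tendsto_descFactorial_div_descFactorial {i s : ℕ} (his : i < s) :
    Tendsto (fun m : ℕ => (m.descFactorial i : ℚ) / m.descFactorial s) atTop (𝓝 0) := by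
  have hratio : ∀ᶠ m : ℕ in atTop,
      ((m - i).descFactorial (s - i) : ℚ)⁻¹ = m.descFactorial i / m.descFactorial s := by
    filter_upwards [eventually_ge_atTop s] with m hm
    have hi : (m.descFactorial i : ℚ) ≠ 0 := by
      exact_mod_cast (Nat.descFactorial_pos.mpr (by omega)).ne'
    rw [← Nat.descFactorial_mul_descFactorial his.le, Nat.cast_mul, mul_comm, ← div_div,
      div_self hi, one_div]
  have hgrow : Tendsto (fun m : ℕ => (m - i).descFactorial (s - i)) atTop atTop := by
    refine tendsto_atTop_mono (fun m => ?_) (tendsto_sub_atTop_nat s)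
    calc m - s ≤ m - i + 1 - (s - i) := by omega
      _ ≤ (m - i + 1 - (s - i)) ^ (s - i) := Nat.le_self_pow (by omega) _
      _ ≤ (m - i).descFactorial (s - i) := Nat.pow_sub_le_descFactorial _ _
  exact (tendsto_inv_atTop_zero.comp (tendsto_natCast_atTop_atTop.comp hgrow)).congr' hratio

theorem tendsto_sum_mul_descFactorial_div_descFactorial {i t : ℕ} (a : ℕ → ℚ)
    (ha : ∀ s < i, a s = 0) (hit : i < t) :
    Tendsto (fun m : ℕ => ∑ s ∈ range t, a s * (m.descFactorial i / m.descFactorial s))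
      atTop (𝓝 (a i)) := by
  have hlim : a i = ∑ s ∈ range t, a s * if s = i then 1 else 0 := by
    simp [mem_range.mpr hit]
  rw [hlim]
  refine tendsto_finsetSum _ fun s _ => ?_
  rcases lt_trichotomy s i with hsi | rfl | his
  · simp [ha s hsi]
  · refine tendsto_const_nhds.congr' ?_
    filter_upwards [eventually_ge_atTop s] with m hm
    have : (m.descFactorial s : ℚ) ≠ 0 := by exact_mod_cast (Nat.descFactorial_pos.mpr hm).ne'
    simp [this]
  · simpa [his.ne'] using (tendsto_descFactorial_div_descFactorial his).const_mul (a s)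

/-- Let `1 ≤ i < n−3`.  Then for every `N` there exists `m ≥ N` with `m > n` such that
`(1+x)^{m−n}·T^{i+3}((1+x)^n)` does not lie in the `ℚ`-linear span of the polynomials
`T^j((1+x)^m)` for `j ∈ {1, …, n} \ {i}`. -/
theorem stmt7 (n i : ℕ) (hi : 1 ≤ i) (hin : i < n - 3) :
    ∀ N : ℕ, ∃ m : ℕ, N ≤ m ∧ n < m ∧
      (1 + X) ^ (m - n) * T^[i + 3] ((1 + X) ^ n) ∉
        Submodule.span ℚ
          ((fun j => T^[j] ((1 + X) ^ m)) '' {j : ℕ | 1 ≤ j ∧ j ≤ n ∧ j ≠ i}) := by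
  intro N
  set a : ℕ → ℚ := fun s =>
    (i + 3).stirlingSecond s * n.descFactorial s * (descPochhammer ℚ s).coeff i
  have ha : ∀ s < i, a s = 0 := fun s hs => by
    simp [a, coeff_eq_zero_of_natDegree_lt, descPochhammer_natDegree, hs]
  have hai : a i ≠ 0 := by
    have hS := Nat.stirlingSecond_pos (n := i + 3) (k := i) hi (by omega)
    have hD := Nat.descFactorial_pos.mpr (show i ≤ n by omega)
    have hlead := (monic_descPochhammer ℚ i).coeff_natDegree
    rw [descPochhammer_natDegree] at hlead
    simp only [a, hlead, mul_one]
    positivity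
  have hlim := tendsto_sum_mul_descFactorial_div_descFactorial a ha (show i < i + 3 + 1 by omega)
  obtain ⟨m, ⟨hm, hnm⟩, hNm⟩ :=
    (((hlim.eventually_ne hai).and (eventually_gt_atTop n)).and (eventually_ge_atTop N)).exists
  refine ⟨m, hNm, hnm, fun hmem => hm ?_⟩
  have hzero := interpCoeff_eq_zero_of_mem_span (i := i) hnm.le
    (fun j hj => ⟨hj.2.1, hj.2.2⟩) hmem
  rw [interpCoeff_one_add_X_pow_mul_iterate_T hnm.le (by omega)] at hzero
  calc ∑ s ∈ range (i + 3 + 1), a s * (m.descFactorial i / m.descFactorial s)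
      = m.descFactorial i * ∑ s ∈ range (i + 3 + 1),
          ((i + 3).stirlingSecond s * n.descFactorial s : ℚ) *
            ((descPochhammer ℚ s).coeff i / m.descFactorial s) := by
        rw [mul_sum]
        exact sum_congr rfl fun s _ => by ring
    _ = 0 := by rw [hzero, mul_zero]
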